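/- Let f : ℝ^d → ℝ be L-smooth and C ∈ B³(δ). Then for any x and 0 ≤ η ≤ 1/L, E[f(x − ηC(∇f(x)))] ≤ f(x) − (η/(2δ))‖∇f(x)‖². -/

import Mathlib

/-!
Smoothness bounds `f (x - η C)` by a quadratic in `C`; taking expectations leaves
`f x - η E⟪g, C⟫ + (L η² / 2) E‖C‖²` with `g = ∇f(x)`. Expanding `E‖C - g‖²` rewrites
`2 E⟪g, C⟫` as `E‖C‖² + ‖g‖² - E‖C - g‖²`, and then `Lη ≤ 1` absorbs the `E‖C‖²` term while the
`B³(δ)` bound on `E‖C - g‖²` leaves exactly `‖g‖² / δ`.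
-/

open MeasureTheory

section

variable {E Ω : Type*} [NormedAddCommGroup E] [InnerProductSpace ℝ E] [MeasurableSpace Ω]
  {μ : Measure Ω}

lemma le_of_smooth_step {f : E → ℝ} {f' : E → E} {L : ℝ}
    (hsmooth : ∀ x y, f y ≤ f x + inner ℝ (f' x) (y - x) + L / 2 * ‖y - x‖ ^ 2)
    (x v : E) (η : ℝ) :
    f (x - η • v) ≤ f x - η * inner ℝ (f' x) v + L / 2 * η ^ 2 * ‖v‖ ^ 2 := by
  have h := hsmooth x (x - η • v)
  rw [sub_sub_cancel_left, inner_neg_right, real_inner_smul_right, norm_neg, norm_smul,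
    Real.norm_eq_abs, mul_pow, sq_abs] at h
  linarith

lemma integral_norm_sub_sq [IsProbabilityMeasure μ] {C : Ω → E} (hC : Integrable C μ)
    (hC2 : Integrable (fun ω => ‖C ω‖ ^ 2) μ) (g : E) :
    ∫ ω, ‖C ω - g‖ ^ 2 ∂μ
      = ∫ ω, ‖C ω‖ ^ 2 ∂μ - 2 * ∫ ω, inner ℝ g (C ω) ∂μ + ‖g‖ ^ 2 := by
  have hinner : Integrable (fun ω => inner ℝ g (C ω)) μ := hC.const_inner g
  have hlinear : Integrable (fun ω => ‖C ω‖ ^ 2 - 2 * inner ℝ g (C ω)) μ :=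
    hC2.sub (hinner.const_mul 2)
  simp_rw [norm_sub_sq_real, real_inner_comm g (C _)]
  rw [integral_add hlinear (integrable_const _),
    integral_sub hC2 (hinner.const_mul 2), integral_const_mul, integral_const, probReal_univ,
    one_smul]

lemma integral_le_of_smooth_step [IsProbabilityMeasure μ] {f : E → ℝ} {f' : E → E} {L : ℝ}
    (hsmooth : ∀ x y, f y ≤ f x + inner ℝ (f' x) (y - x) + L / 2 * ‖y - x‖ ^ 2)
    {C : Ω → E} (hC : Integrable C μ) (hC2 : Integrable (fun ω => ‖C ω‖ ^ 2) μ) (x : E) (η : ℝ)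
    (hf : Integrable (fun ω => f (x - η • C ω)) μ) :
    ∫ ω, f (x - η • C ω) ∂μ
      ≤ f x - η * ∫ ω, inner ℝ (f' x) (C ω) ∂μ + L / 2 * η ^ 2 * ∫ ω, ‖C ω‖ ^ 2 ∂μ := by
  have hinner : Integrable (fun ω => inner ℝ (f' x) (C ω)) μ := hC.const_inner _
  have hlinear : Integrable (fun ω => f x - η * inner ℝ (f' x) (C ω)) μ :=
    (integrable_const _).sub (hinner.const_mul η)
  have hbound : Integrable (fun ω =>
      f x - η * inner ℝ (f' x) (C ω) + L / 2 * η ^ 2 * ‖C ω‖ ^ 2) μ :=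
    hlinear.add (hC2.const_mul _)
  refine (integral_mono hf hbound fun ω => le_of_smooth_step hsmooth x (C ω) η).trans_eq ?_
  rw [integral_add hlinear (hC2.const_mul _),
    integral_sub (integrable_const _) (hinner.const_mul η), integral_const_mul,
    integral_const_mul, integral_const, probReal_univ, one_smul]

theorem integral_le_of_smooth_compressed_step [IsProbabilityMeasure μ] {f : E → ℝ} {f' : E → E}
    {L : ℝ} (hsmooth : ∀ x y, f y ≤ f x + inner ℝ (f' x) (y - x) + L / 2 * ‖y - x‖ ^ 2)
    {C : Ω → E} (hC : Integrable C μ) (hC2 : Integrable (fun ω => ‖C ω‖ ^ 2) μ) {x : E} {δ : ℝ}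
    (hB : ∫ ω, ‖C ω - f' x‖ ^ 2 ∂μ ≤ (1 - 1 / δ) * ‖f' x‖ ^ 2)
    {η : ℝ} (hη0 : 0 ≤ η) (hLη : L * η ≤ 1)
    (hf : Integrable (fun ω => f (x - η • C ω)) μ) :
    ∫ ω, f (x - η • C ω) ∂μ ≤ f x - η / (2 * δ) * ‖f' x‖ ^ 2 := by
  have hstep := integral_le_of_smooth_step hsmooth hC hC2 x η hf
  rw [integral_norm_sub_sq hC hC2] at hB
  have hA : 0 ≤ η * (1 - L * η) * ∫ ω, ‖C ω‖ ^ 2 ∂μ :=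
    mul_nonneg (mul_nonneg hη0 (sub_nonneg.2 hLη)) (integral_nonneg fun _ => sq_nonneg _)
  have hB' := mul_le_mul_of_nonneg_left hB hη0
  have hrate : η / (2 * δ) * ‖f' x‖ ^ 2 = η * (1 / δ) * ‖f' x‖ ^ 2 / 2 := by ring
  linarith
end

theorem stmt17_general {d : ℕ} {Ω : Type*} [MeasurableSpace Ω]
    (μ : Measure Ω) [IsProbabilityMeasure μ]
    (f : EuclideanSpace ℝ (Fin d) → ℝ) (f' : EuclideanSpace ℝ (Fin d) → EuclideanSpace ℝ (Fin d))
    (L : ℝ) (hL : 0 < L)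
    (hsmooth : ∀ x y, f y ≤ f x + (inner ℝ (f' x) (y - x) : ℝ) + L / 2 * ‖y - x‖ ^ 2)
    (C : EuclideanSpace ℝ (Fin d) → Ω → EuclideanSpace ℝ (Fin d))
    (δ : ℝ)
    (hintC : ∀ g, Integrable (C g) μ)
    (hintC2 : ∀ g, Integrable (fun ω => ‖C g ω‖ ^ 2) μ)
    (hB : ∀ g, ∫ ω, ‖C g ω - g‖ ^ 2 ∂μ ≤ (1 - 1 / δ) * ‖g‖ ^ 2)
    (η : ℝ) (hη0 : 0 ≤ η) (hη : η ≤ 1 / L) (x : EuclideanSpace ℝ (Fin d))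
    (hintf : Integrable (fun ω => f (x - η • C (f' x) ω)) μ) :
    ∫ ω, f (x - η • C (f' x) ω) ∂μ ≤ f x - (η / (2 * δ)) * ‖f' x‖ ^ 2 := by
  have hLη : L * η ≤ 1 := by rwa [le_div_iff₀ hL, mul_comm] at hη
  exact integral_le_of_smooth_compressed_step hsmooth (hintC _) (hintC2 _) (hB _) hη0 hLη hintf

/-- One step of compressed gradient descent with `C ∈ B³(δ)`: if `f` is
`L`-smooth with gradient `f'`, then for `0 ≤ η ≤ 1/L`,
`E[f(x − ηC(∇f(x)))] ≤ f(x) − (η/(2δ))‖∇f(x)‖²`. -/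
theorem stmt17 {d : ℕ} {Ω : Type*} [MeasurableSpace Ω]
    (μ : Measure Ω) [IsProbabilityMeasure μ]
    (f : EuclideanSpace ℝ (Fin d) → ℝ) (f' : EuclideanSpace ℝ (Fin d) → EuclideanSpace ℝ (Fin d))
    (L : ℝ) (hL : 0 < L)
    (hsmooth : ∀ x y, f y ≤ f x + (inner ℝ (f' x) (y - x) : ℝ) + L / 2 * ‖y - x‖ ^ 2)
    (C : EuclideanSpace ℝ (Fin d) → Ω → EuclideanSpace ℝ (Fin d))
    (δ : ℝ) (hδ : 0 < δ)
    (hintC : ∀ g, Integrable (C g) μ)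
    (hintC2 : ∀ g, Integrable (fun ω => ‖C g ω‖ ^ 2) μ)
    (hB : ∀ g, ∫ ω, ‖C g ω - g‖ ^ 2 ∂μ ≤ (1 - 1 / δ) * ‖g‖ ^ 2)
    (η : ℝ) (hη0 : 0 ≤ η) (hη : η ≤ 1 / L) (x : EuclideanSpace ℝ (Fin d))
    (hintf : Integrable (fun ω => f (x - η • C (f' x) ω)) μ) :
    ∫ ω, f (x - η • C (f' x) ω) ∂μ ≤ f x - (η / (2 * δ)) * ‖f' x‖ ^ 2 :=
  stmt17_general μ f f' L hL hsmooth C δ hintC hintC2 hB η hη0 hη x hintf
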